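/- arXiv:2212.10128 — 2 statements merged into one kernel-verified Lean document; each statement's English description precedes it below -/
import Mathlib

section
/- Let A ⊆ ℤ_{≥0}^d be finite and compressed, let Φ be the shift map, and write φ(J) = {j+1 : j ∈ J}. Then for any J_1, J_2 ⊆ {1,...,d}, |p_{J_1}(A)|·|p_{J_2}(A)| ≤ |p_{J_1 ∩ φ(J_2)}(A)| · |A + Φ(A)|. -/
open scoped Pointwise

/-- Projection onto the coordinates indexed by `J`, zeroing the others. -/
def projI {d : ℕ} (J : Finset (Fin d)) (x : Fin d → ℕ) : Fin d → ℕ :=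
  fun i => if i ∈ J then x i else 0

/-- The inclusion `(x_1,…,x_d) ↦ (x_1,…,x_d,0)` of `ℤ_{≥0}^d` into `ℤ_{≥0}^{d+1}`. -/
def inclMap {d : ℕ} (x : Fin d → ℕ) : Fin (d + 1) → ℕ := Fin.snoc x 0

/-- The shift map `(x_1,…,x_d) ↦ (0,x_1,…,x_d)`. -/
def shiftMap {d : ℕ} (x : Fin d → ℕ) : Fin (d + 1) → ℕ := Fin.cons 0 x

/-- `A` is compressed: it is downward closed in each coordinate. -/
def IsCompressed {d : ℕ} (A : Finset (Fin d → ℕ)) : Prop :=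
  ∀ a ∈ A, ∀ b : Fin d → ℕ, (∀ i, b i ≤ a i) → b ∈ A

/-- `φ(J) = {j + 1 : j ∈ J}` as a subset of the coordinates. -/
def phiSet {d : ℕ} (J : Finset (Fin d)) : Finset (Fin d) :=
  Finset.univ.filter (fun i => ∃ j ∈ J, (i : ℕ) = (j : ℕ) + 1)

lemma shift_castSucc_zero {d : ℕ} (y : Fin d → ℕ) {J₂ : Finset (Fin d)}
    (hy : ∀ j ∉ J₂, y j = 0) (i : Fin d) (hi : i ∉ phiSet J₂) :
    shiftMap y (Fin.castSucc i) = 0 := by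
  rcases i with ⟨m, hm⟩
  cases m with
  | zero =>
      have h0 : Fin.castSucc (⟨0, hm⟩ : Fin d) = 0 := by ext; rfl
      rw [h0]
      unfold shiftMap
      rw [Fin.cons_zero]
  | succ k =>
      have hk : k < d := Nat.lt_of_succ_lt hm
      have heq : Fin.castSucc (⟨k+1, hm⟩ : Fin d) = Fin.succ ⟨k, hk⟩ := by ext; rfl
      rw [heq]
      unfold shiftMap
      rw [Fin.cons_succ]
      apply hy
      intro hmem
      exact hi (Finset.mem_filter.mpr ⟨Finset.mem_univ _, ⟨⟨k, hk⟩, hmem, rfl⟩⟩)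

theorem projection_product_bound {d : ℕ} (A : Finset (Fin d → ℕ))
    (hA : IsCompressed A) (J₁ J₂ : Finset (Fin d)) :
    (A.image (projI J₁)).card * (A.image (projI J₂)).card ≤
      (A.image (projI (J₁ ∩ phiSet J₂))).card *
        (A.image inclMap + A.image shiftMap).card := by
  classical
  have hmem : ∀ (J : Finset (Fin d)) (x : Fin d → ℕ), x ∈ A.image (projI J) →
      x ∈ A ∧ ∀ i ∉ J, x i = 0 := by
    intro J x hx
    obtain ⟨a, ha, rfl⟩ := Finset.mem_image.mp hx
    refine ⟨hA a ha _ (fun i => ?_), fun i hi => if_neg hi⟩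
    unfold projI; split <;> simp
  rw [← Finset.card_product, ← Finset.card_product]
  apply Finset.card_le_card_of_injOn
    (fun p => (projI (J₁ ∩ phiSet J₂) p.1, inclMap p.1 + shiftMap p.2))
  · rintro ⟨x, y⟩ hp
    rw [Finset.mem_coe, Finset.mem_product] at hp ⊢
    obtain ⟨hx, hy⟩ := hp
    obtain ⟨hxA, -⟩ := hmem _ _ hx
    obtain ⟨hyA, -⟩ := hmem _ _ hy
    exact ⟨Finset.mem_image_of_mem _ hxA,
      Finset.add_mem_add (Finset.mem_image_of_mem _ hxA) (Finset.mem_image_of_mem _ hyA)⟩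
  · rintro ⟨x₁, y₁⟩ h₁ ⟨x₂, y₂⟩ h₂ heq
    simp only [Finset.mem_coe, Finset.mem_product] at h₁ h₂
    obtain ⟨hx₁, hy₁⟩ := h₁
    obtain ⟨hx₂, hy₂⟩ := h₂
    obtain ⟨-, zx₁⟩ := hmem _ _ hx₁
    obtain ⟨-, zx₂⟩ := hmem _ _ hx₂
    obtain ⟨-, zy₁⟩ := hmem _ _ hy₁
    obtain ⟨-, zy₂⟩ := hmem _ _ hy₂
    simp only [Prod.mk.injEq] at heq
    obtain ⟨hK, hsum⟩ := heq
    have hx : x₁ = x₂ := by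
      funext i
      by_cases hi1 : i ∈ J₁
      · by_cases hi2 : i ∈ phiSet J₂
        · have := congrFun hK i
          simpa [projI, Finset.mem_inter, hi1, hi2] using this
        · have hz := congrFun hsum (Fin.castSucc i)
          simp only [Pi.add_apply, inclMap, Fin.snoc_castSucc] at hz
          rw [shift_castSucc_zero y₁ zy₁ i hi2, shift_castSucc_zero y₂ zy₂ i hi2] at hz
          simpa using hz
      · rw [zx₁ i hi1, zx₂ i hi1]
    subst hx
    have hsh : shiftMap y₁ = shiftMap y₂ := by
      funext j
      have := congrFun hsum j
      simp only [Pi.add_apply] at this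
      exact Nat.add_left_cancel this
    have hy : y₁ = y₂ := by
      funext j
      have := congrFun hsh (Fin.succ j)
      simpa [shiftMap, Fin.cons_succ] using this
    simp [hy]
end

section
/- Let A ⊆ ℤ_{≥0}^d be compressed and J_1, J_2 ⊆ {1,...,d}. Then the map (x, y) ↦ (p_{J_1 ∩ φ(J_2)}(x), x + Φ(y)) from p_{J_1}(A) × p_{J_2}(A) to p_{J_1 ∩ φ(J_2)}(A) × (A + Φ(A)) is a well-defined injection, where φ(J) = {j+1 : j ∈ J} and Φ is the coordinate shift. -/
/-! The `x`-coordinates outside `J₁ ∩ φ(J₂)` can be read off `z = x + Φ(y)`: if `i ∉ J₁` then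
`x_i = 0`, and if `i ∈ J₁ \ φ(J₂)` then `y_{i-1} = 0`, so `x_i = z_i`. Once `x` is known, `y` is
recovered from `z - x` since `Φ` is injective. -/

open scoped Pointwise

section

variable {d : ℕ}

theorem support_projI_subset (J : Finset (Fin d)) (x : Fin d → ℕ) :
    Function.support (projI J x) ⊆ J := by
  intro i hi
  by_contra hiJ
  exact hi (if_neg hiJ)

theorem IsCompressed.image_projI_subset {A : Finset (Fin d → ℕ)} (hA : IsCompressed A)
    (J : Finset (Fin d)) : A.image (projI J) ⊆ A := by
  simp only [Finset.subset_iff, Finset.mem_image, forall_exists_index, and_imp]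
  rintro _ a ha rfl
  refine hA a ha _ fun i => ?_
  unfold projI
  split_ifs <;> simp

theorem shiftMap_injective : Function.Injective (shiftMap : (Fin d → ℕ) → Fin (d + 1) → ℕ) :=
  Fin.cons_right_injective (α := fun _ => ℕ) 0

theorem inclMap_add_shiftMap_castSucc (x y : Fin d → ℕ) (i : Fin d) :
    (inclMap x + shiftMap y) i.castSucc = x i + shiftMap y i.castSucc := by
  simp [inclMap, Fin.snoc_castSucc]

theorem shiftMap_castSucc_eq_zero {J : Finset (Fin d)} {y : Fin d → ℕ}
    (hy : Function.support y ⊆ J) {i : Fin d} (hi : i ∉ phiSet J) :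
    shiftMap y i.castSucc = 0 := by
  rcases Fin.eq_zero_or_eq_succ i.castSucc with hi0 | ⟨j, hij⟩
  · simp [shiftMap, hi0]
  · have hjJ : j ∉ J := fun hjJ =>
      hi (Finset.mem_filter.2 ⟨Finset.mem_univ _, j, hjJ, by simpa using congrArg Fin.val hij⟩)
    simpa [shiftMap, hij] using Function.notMem_support.1 fun h => hjJ (hy h)

theorem eq_of_projI_inter_phiSet_eq {J₁ J₂ : Finset (Fin d)} {x x' y y' : Fin d → ℕ}
    (hx : Function.support x ⊆ J₁) (hx' : Function.support x' ⊆ J₁)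
    (hy : Function.support y ⊆ J₂) (hy' : Function.support y' ⊆ J₂)
    (hproj : projI (J₁ ∩ phiSet J₂) x = projI (J₁ ∩ phiSet J₂) x')
    (hsum : inclMap x + shiftMap y = inclMap x' + shiftMap y') : x = x' := by
  funext i
  by_cases hi₁ : i ∈ J₁
  · by_cases hi₂ : i ∈ phiSet J₂
    · simpa [projI, hi₁, hi₂] using congrFun hproj i
    · have hz := congrFun hsum i.castSucc
      rwa [inclMap_add_shiftMap_castSucc, inclMap_add_shiftMap_castSucc,
        shiftMap_castSucc_eq_zero hy hi₂, shiftMap_castSucc_eq_zero hy' hi₂,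
        add_zero, add_zero] at hz
  · rw [Function.notMem_support.1 fun h => hi₁ (hx h),
      Function.notMem_support.1 fun h => hi₁ (hx' h)]

end

theorem injection_into_product {d : ℕ} (A : Finset (Fin d → ℕ))
    (hA : IsCompressed A) (J₁ J₂ : Finset (Fin d)) :
    Set.MapsTo (fun p : (Fin d → ℕ) × (Fin d → ℕ) =>
        (projI (J₁ ∩ phiSet J₂) p.1, inclMap p.1 + shiftMap p.2))
      ((A.image (projI J₁)) ×ˢ (A.image (projI J₂)))
      ((A.image (projI (J₁ ∩ phiSet J₂))) ×ˢ (A.image inclMap + A.image shiftMap)) ∧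
    Set.InjOn (fun p : (Fin d → ℕ) × (Fin d → ℕ) =>
        (projI (J₁ ∩ phiSet J₂) p.1, inclMap p.1 + shiftMap p.2))
      ((A.image (projI J₁)) ×ˢ (A.image (projI J₂))) := by
  have support_subset {J : Finset (Fin d)} {x : Fin d → ℕ} (hx : x ∈ A.image (projI J)) :
      Function.support x ⊆ J := by
    obtain ⟨a, -, rfl⟩ := Finset.mem_image.1 hx
    exact support_projI_subset J a
  refine ⟨?_, ?_⟩
  · rintro ⟨x, y⟩ ⟨hx, hy⟩
    have hxA := hA.image_projI_subset J₁ hx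
    have hyA := hA.image_projI_subset J₂ hy
    exact ⟨Finset.mem_image_of_mem _ hxA,
      Finset.add_mem_add (Finset.mem_image_of_mem _ hxA) (Finset.mem_image_of_mem _ hyA)⟩
  · rintro ⟨x, y⟩ ⟨hx, hy⟩ ⟨x', y'⟩ ⟨hx', hy'⟩ h
    obtain ⟨hproj, hsum⟩ : _ ∧ inclMap x + shiftMap y = inclMap x' + shiftMap y' :=
      Prod.mk.inj h
    obtain rfl : x = x' := eq_of_projI_inter_phiSet_eq (support_subset hx) (support_subset hx')
      (support_subset hy) (support_subset hy') hproj hsum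
    rw [shiftMap_injective (add_left_cancel hsum)]
end
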